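/- arXiv:2209.02690 — 4 statements merged into one kernel-verified Lean document; each statement's English description precedes it below -/
import Mathlib

section
/- For non-empty finite point sets $S_+, S_- \subseteq \mathbb{R}^n$, a vector $(z, 0) \in \mathbb{R}^{n+1}$ lies in the convex cone generated by $\{(x,1) : x \in S_+\} \cup \{(-y,-1) : y \in S_-\}$ if and only if $z$ lies in the convex cone generated by $\{x - y : x \in S_+, y \in S_-\}$. -/
/-- Membership in the convex cone `K_{S₊,S₋}` generated by the lifted points
`(x,1)` for `x ∈ S₊` and `(-y,-1)` for `y ∈ S₋`. -/
def InConeK (n : ℕ) (Sp Sm : Finset (Fin n → ℝ)) (v : (Fin n → ℝ) × ℝ) : Prop :=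
  ∃ lam gam : (Fin n → ℝ) → ℝ, (∀ x, 0 ≤ lam x) ∧ (∀ y, 0 ≤ gam y) ∧
    v = ∑ x ∈ Sp, lam x • ((x, (1 : ℝ)) : (Fin n → ℝ) × ℝ) +
        ∑ y ∈ Sm, gam y • ((-y, (-1 : ℝ)) : (Fin n → ℝ) × ℝ)

/-- Membership in the convex cone generated by the difference set `S₊ - S₋`. -/
def InConeDiff (n : ℕ) (Sp Sm : Finset (Fin n → ℝ)) (z : Fin n → ℝ) : Prop :=
  ∃ mu : (Fin n → ℝ) × (Fin n → ℝ) → ℝ, (∀ p, 0 ≤ mu p) ∧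
    z = ∑ p ∈ Sp ×ˢ Sm, mu p • (p.1 - p.2)

/-- for non-empty finite `S₊, S₋ ⊆ ℝⁿ`, `(z,0)` lies in the cone
`K_{S₊,S₋}` iff `z` lies in the cone generated by `S₊ - S₋`. -/
theorem stmt2 (n : ℕ) (Sp Sm : Finset (Fin n → ℝ))
    (hp : Sp.Nonempty) (hm : Sm.Nonempty) (z : Fin n → ℝ) :
    InConeK n Sp Sm (z, 0) ↔ InConeDiff n Sp Sm z := by
  constructor
  · rintro ⟨lam, gam, hlam, hgam, heq⟩
    have h2 := congrArg Prod.snd heq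
    have h1 := congrArg Prod.fst heq
    simp only [Prod.snd_add, Prod.snd_sum, Prod.smul_snd, smul_eq_mul, mul_one,
      mul_neg, Finset.sum_neg_distrib, Prod.fst_add, Prod.fst_sum, Prod.smul_fst] at h1 h2
    have hsum : ∑ x ∈ Sp, lam x = ∑ y ∈ Sm, gam y := by linarith [h2]
    set t := ∑ x ∈ Sp, lam x with ht
    have htnn : 0 ≤ t := Finset.sum_nonneg fun x _ => hlam x
    rcases eq_or_lt_of_le htnn with h0 | hpos
    · have hl0 : ∀ x ∈ Sp, lam x = 0 :=
        (Finset.sum_eq_zero_iff_of_nonneg fun x _ => hlam x).mp h0.symm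
      have hg0 : ∀ y ∈ Sm, gam y = 0 :=
        (Finset.sum_eq_zero_iff_of_nonneg fun y _ => hgam y).mp (hsum ▸ h0.symm)
      have hz : z = 0 := by
        rw [h1, Finset.sum_eq_zero, Finset.sum_eq_zero, add_zero]
        · intro y hy; rw [hg0 y hy, zero_smul]
        · intro x hx; rw [hl0 x hx, zero_smul]
      exact ⟨0, fun p => le_refl 0, by simp [hz]⟩
    · refine ⟨fun p => lam p.1 * gam p.2 / t,
        fun p => div_nonneg (mul_nonneg (hlam _) (hgam _)) htnn, ?_⟩
      rw [Finset.sum_product]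
      calc z = ∑ x ∈ Sp, lam x • x + ∑ x ∈ Sm, gam x • -x := h1
        _ = (∑ x ∈ Sp, lam x • x) - ∑ y ∈ Sm, gam y • y := by
            simp [smul_neg, sub_eq_add_neg, Finset.sum_neg_distrib]
        _ = (∑ x ∈ Sp, ∑ y ∈ Sm, (lam x * gam y / t) • x)
            - ∑ x ∈ Sp, ∑ y ∈ Sm, (lam x * gam y / t) • y := by
            congr 1
            · refine Finset.sum_congr rfl fun x hx => ?_
              rw [← Finset.sum_smul, ← Finset.sum_div, ← Finset.mul_sum, ← hsum,
                mul_div_assoc, div_self hpos.ne', mul_one]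
            · rw [Finset.sum_comm]
              refine Finset.sum_congr rfl fun y hy => ?_
              rw [← Finset.sum_smul, ← Finset.sum_div, ← Finset.sum_mul, ← ht,
                mul_comm, mul_div_assoc, div_self hpos.ne', mul_one]
        _ = ∑ x ∈ Sp, ∑ y ∈ Sm, (lam x * gam y / t) • (x - y) := by
            simp [smul_sub, Finset.sum_sub_distrib]
  · rintro ⟨mu, hmu, heq⟩
    refine ⟨fun x => ∑ y ∈ Sm, mu (x, y), fun y => ∑ x ∈ Sp, mu (x, y),
      fun x => Finset.sum_nonneg fun y _ => hmu _,
      fun y => Finset.sum_nonneg fun x _ => hmu _, ?_⟩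
    apply Prod.ext
    · simp only [Prod.fst_add, Prod.fst_sum, Prod.smul_fst]
      rw [heq, Finset.sum_product]
      simp only [smul_sub, Finset.sum_sub_distrib, Finset.sum_smul, smul_neg,
        Finset.sum_neg_distrib]
      have hc : ∑ x ∈ Sp, ∑ y ∈ Sm, mu (x, y) • y
          = ∑ y ∈ Sm, ∑ x ∈ Sp, mu (x, y) • y := Finset.sum_comm
      rw [hc]
      abel
    · simp only [Prod.snd_add, Prod.snd_sum, Prod.smul_snd, smul_eq_mul, mul_one, mul_neg]
      have hc : ∑ x ∈ Sp, ∑ y ∈ Sm, mu (x, y) = ∑ y ∈ Sm, ∑ x ∈ Sp, mu (x, y) :=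
        Finset.sum_comm
      simp [Finset.sum_neg_distrib, hc]
end

section
/- Let $S_+, S_- \subseteq \mathbb{R}^n$ be finite sets strictly separable by an affine hyperplane, and let $K = \mathrm{cone}\{(x,1): x \in S_+\} \cup \{(-y,-1): y \in S_-\}$. Then the extreme rays of $K$ are exactly the rays $\overline{(x,1)}$ for $x \in A_+^*$ and $\overline{(-y,-1)}$ for $y \in A_-^*$. -/
/-- `v` generates an extreme ray: `v ∈ C` and any decomposition `v = v₁ + v₂` with
`v₁, v₂ ∈ C` forces `v₁, v₂` to be non-negative multiples of `v`. -/
def IsExtremeRay {V : Type*} [AddCommGroup V] [Module ℝ V] (C : V → Prop) (v : V) : Prop :=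
  C v ∧ ∀ v₁ v₂ : V, C v₁ → C v₂ → v = v₁ + v₂ →
    (∃ a : ℝ, 0 ≤ a ∧ v₁ = a • v) ∧ (∃ b : ℝ, 0 ≤ b ∧ v₂ = b • v)

/-- `x* ∈ S₊` is critical: some affine functional vanishes at `x*`, is positive on the
rest of `S₊`, and negative on `S₋`. -/
def CritPlus (n : ℕ) (Sp Sm : Finset (Fin n → ℝ)) (xs : Fin n → ℝ) : Prop :=
  xs ∈ Sp ∧ ∃ (c : Fin n → ℝ) (d : ℝ), (∑ i, c i * xs i) + d = 0 ∧
    (∀ x ∈ Sp, x ≠ xs → (∑ i, c i * x i) + d > 0) ∧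
    (∀ y ∈ Sm, (∑ i, c i * y i) + d < 0)

/-- `y* ∈ S₋` is critical (symmetric definition). -/
def CritMinus (n : ℕ) (Sp Sm : Finset (Fin n → ℝ)) (ys : Fin n → ℝ) : Prop :=
  ys ∈ Sm ∧ ∃ (c : Fin n → ℝ) (d : ℝ), (∑ i, c i * ys i) + d = 0 ∧
    (∀ y ∈ Sm, y ≠ ys → (∑ i, c i * y i) + d < 0) ∧
    (∀ x ∈ Sp, (∑ i, c i * x i) + d > 0)

/-!
The homogenized separating functional is positive on every generator `(x, 1)`, `(-y, -1)` of `K`,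
and no two generators are positive multiples of each other. An extreme ray of a finitely
generated cone is spanned by a generator `g₀` which is not in the cone of the remaining ones.
Normalizing the generators onto the slice where the separating functional equals `1`,
Hahn–Banach separates `g₀` from the convex hull of the others; combining the separating functional
with the positive one gives a linear functional that vanishes at `g₀` and is positive on the other
generators, and dehomogenized this is the affine functional in the definition of `A₊*` or `A₋*`.
Conversely, such a functional is nonnegative on `K` and its kernel meets `K` in the ray of `g₀`.
-/

section ExtremeRays

variable {E : Type*} [AddCommGroup E] [Module ℝ E]

def IsExposedGenerator (G : Finset E) (g₀ : E) : Prop :=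
  ∃ ψ : E →ₗ[ℝ] ℝ, ψ g₀ = 0 ∧ ∀ g ∈ G, g ≠ g₀ → 0 < ψ g

lemma IsExtremeRay.exists_pos_smul_eq {C : E → Prop} {v u w : E} (hv : IsExtremeRay C v)
    (hu : C u) (hw : C w) (huw : v = u + w) (hu0 : u ≠ 0) : ∃ a : ℝ, 0 < a ∧ u = a • v := by
  obtain ⟨⟨a, ha, rfl⟩, -⟩ := hv.2 u w hu hw huw
  exact ⟨a, ha.lt_of_ne (by rintro rfl; simp at hu0), rfl⟩

lemma IsExtremeRay.exists_mem_eq_pos_smul {G s : Finset E} {v : E}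
    (hext : IsExtremeRay (· ∈ PointedCone.hull ℝ (G : Set E)) v) (hs : s ⊆ G)
    (hvs : v ∈ PointedCone.hull ℝ (s : Set E)) (hv : v ≠ 0) :
    ∃ g ∈ s, ∃ l : ℝ, 0 < l ∧ v = l • g := by
  classical
  obtain ⟨f, -, hf⟩ := Submodule.mem_span_finset.1 hvs
  obtain ⟨g, hg, hfg⟩ := Finset.exists_ne_zero_of_sum_ne_zero (hf ▸ hv : ∑ a ∈ s, f a • a ≠ 0)
  have hmono : PointedCone.hull ℝ (s : Set E) ≤ PointedCone.hull ℝ (G : Set E) :=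
    Submodule.span_mono (by simpa using hs)
  obtain ⟨a, ha, hfa⟩ := hext.exists_pos_smul_eq
    (hmono (Submodule.smul_mem _ _ (Submodule.subset_span hg)))
    (hmono (Submodule.sum_mem _ fun g' hg' =>
      Submodule.smul_mem _ _ (Submodule.subset_span (Finset.mem_of_mem_erase hg'))))
    (hf ▸ (Finset.add_sum_erase s (fun x => f x • x) hg).symm) hfg
  have hf0 : (0 : ℝ) < f g := lt_of_le_of_ne (f g).2 fun h =>
    hfg (by rw [show f g = 0 from Subtype.ext h.symm, zero_smul])
  refine ⟨g, hg, a⁻¹ * f g, by positivity, ?_⟩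
  rw [mul_smul, Nonneg.coe_smul, hfa, inv_smul_smul₀ ha.ne']

lemma IsExtremeRay.notMem_hull_erase [DecidableEq E] {G : Finset E}
    (hG : ∀ g ∈ G, ∀ g' ∈ G, SameRay ℝ g g' → g = g') {v g₀ : E}
    (hext : IsExtremeRay (· ∈ PointedCone.hull ℝ (G : Set E)) v) (hv : v ≠ 0)
    (hg₀ : g₀ ∈ G) {l : ℝ} (hl : 0 < l) (hvl : v = l • g₀) :
    g₀ ∉ PointedCone.hull ℝ (G.erase g₀ : Set E) := by
  intro h
  have hvh : v ∈ PointedCone.hull ℝ (G.erase g₀ : Set E) := by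
    rw [hvl]; exact PointedCone.smul_mem _ hl.le h
  obtain ⟨g, hg, r, hr, hvr⟩ := hext.exists_mem_eq_pos_smul (Finset.erase_subset g₀ G) hvh hv
  have hsame : SameRay ℝ g g₀ := .inr <| .inr ⟨r, l, hr, hl, hvr.symm.trans hvl⟩
  exact Finset.ne_of_mem_erase hg (hG g (Finset.mem_of_mem_erase hg) g₀ hg₀ hsame)

lemma apply_nonneg_of_mem_hull {s : Set E} {ψ : E →ₗ[ℝ] ℝ} (hψ : ∀ g ∈ s, 0 ≤ ψ g) {w : E}
    (hw : w ∈ PointedCone.hull ℝ s) : 0 ≤ ψ w := by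
  induction hw using Submodule.span_induction with
  | mem x hx => exact hψ x hx
  | zero => simp
  | add x y _ _ hx hy => rw [map_add]; exact add_nonneg hx hy
  | smul a x _ hx => rw [← Nonneg.coe_smul, map_smul, smul_eq_mul]; exact mul_nonneg a.2 hx

lemma eq_smul_of_mem_hull_of_apply_eq_zero {G : Finset E} {g₀ : E} (hg₀ : g₀ ∈ G)
    {ψ : E →ₗ[ℝ] ℝ} (hψG : ∀ g ∈ G, 0 ≤ ψ g) (hψ : ∀ g ∈ G, g ≠ g₀ → 0 < ψ g) {w : E}
    (hw : w ∈ PointedCone.hull ℝ (G : Set E)) (hψw : ψ w = 0) :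
    ∃ a : ℝ, 0 ≤ a ∧ w = a • g₀ := by
  obtain ⟨f, -, rfl⟩ := Submodule.mem_span_finset.1 hw
  simp only [← Nonneg.coe_smul, map_sum, map_smul, smul_eq_mul] at hψw
  have hterm := (Finset.sum_eq_zero_iff_of_nonneg fun g hg => mul_nonneg (f g).2 (hψG g hg)).1 hψw
  refine ⟨f g₀, (f g₀).2, Finset.sum_eq_single_of_mem g₀ hg₀ fun g hg hne => ?_⟩
  have hfg : (f g : ℝ) = 0 := (mul_eq_zero.1 (hterm g hg)).resolve_right (hψ g hg hne).ne'
  rw [← Nonneg.coe_smul, hfg, zero_smul]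

lemma IsExposedGenerator.isExtremeRay {G : Finset E} {g₀ : E} (hg₀ : g₀ ∈ G)
    (h : IsExposedGenerator G g₀) {l : ℝ} (hl : 0 < l) :
    IsExtremeRay (· ∈ PointedCone.hull ℝ (G : Set E)) (l • g₀) := by
  obtain ⟨ψ, hψ₀, hψ⟩ := h
  have hψG : ∀ g ∈ (G : Set E), 0 ≤ ψ g := fun g hg => by
    rcases eq_or_ne g g₀ with rfl | hne
    exacts [hψ₀.ge, (hψ g hg hne).le]
  have hray : ∀ w ∈ PointedCone.hull ℝ (G : Set E), ψ w = 0 → ∃ a : ℝ, 0 ≤ a ∧ w = a • l • g₀ :=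
    fun w hw hψw => by
      obtain ⟨a, ha, rfl⟩ := eq_smul_of_mem_hull_of_apply_eq_zero hg₀ hψG hψ hw hψw
      exact ⟨a / l, div_nonneg ha hl.le, by rw [smul_smul, div_mul_cancel₀ a hl.ne']⟩
  refine ⟨PointedCone.smul_mem _ hl.le (Submodule.subset_span hg₀), fun v₁ v₂ h₁ h₂ hv => ?_⟩
  have hsum : ψ v₁ + ψ v₂ = 0 := by rw [← map_add, ← hv, map_smul, hψ₀, smul_zero]
  have h₁' := apply_nonneg_of_mem_hull hψG h₁
  have h₂' := apply_nonneg_of_mem_hull hψG h₂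
  exact ⟨hray v₁ h₁ (by linarith), hray v₂ h₂ (by linarith)⟩

variable [TopologicalSpace E] [IsTopologicalAddGroup E] [ContinuousSMul ℝ E]
  [LocallyConvexSpace ℝ E] [T1Space E]

lemma isExposedGenerator_insert_of_notMem_hull [DecidableEq E] {H : Finset E} {φ : E →ₗ[ℝ] ℝ}
    (hφ : ∀ h ∈ H, 0 < φ h) {w : E} (hw : 0 < φ w)
    (hwH : w ∉ PointedCone.hull ℝ (H : Set E)) : IsExposedGenerator (insert w H) w := by
  set P := H.image fun h => (φ h)⁻¹ • h
  have hP : convexHull ℝ (P : Set E) ⊆ PointedCone.hull ℝ (H : Set E) := by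
    refine convexHull_min ?_ (PointedCone.convex _)
    simp only [P, Finset.coe_image, Set.image_subset_iff]
    exact fun h hh => PointedCone.smul_mem _ (inv_nonneg.2 (hφ h hh).le) (Submodule.subset_span hh)
  have hw' : (φ w)⁻¹ • w ∉ convexHull ℝ (P : Set E) := fun hmem => hwH <| by
    simpa [smul_smul, mul_inv_cancel₀ hw.ne'] using PointedCone.smul_mem _ hw.le (hP hmem)
  obtain ⟨f, u, r, hfu, hur, hrf⟩ := geometric_hahn_banach_compact_closed (convex_convexHull ℝ _)
    (P.finite_toSet.isCompact_convexHull ℝ) (convex_singleton _) isClosed_singleton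
    (Set.disjoint_singleton_right.2 hw')
  -- at `h ∈ H` this is `φ h * (f ((φ w)⁻¹ • w) - f ((φ h)⁻¹ • h))`
  refine ⟨f ((φ w)⁻¹ • w) • φ - f, ?_, fun h hh hne => ?_⟩
  · simp only [LinearMap.sub_apply, LinearMap.smul_apply, ContinuousLinearMap.coe_coe, map_smul,
      smul_eq_mul]
    field_simp
    ring
  · replace hh := (Finset.mem_insert.1 hh).resolve_left hne
    have hfh := hfu _ (subset_convexHull ℝ _ (Finset.mem_image_of_mem _ hh))
    have hfw := hrf _ rfl
    have hφh := hφ h hh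
    simp only [map_smul, smul_eq_mul] at hfh hfw
    simp only [LinearMap.sub_apply, LinearMap.smul_apply, ContinuousLinearMap.coe_coe, map_smul,
      smul_eq_mul]
    have key := mul_pos hφh (sub_pos.2 (hfh.trans (hur.trans hfw)))
    rwa [mul_sub, mul_inv_cancel_left₀ hφh.ne', mul_comm] at key

theorem isExtremeRay_hull_iff {G : Finset E} {φ : E →ₗ[ℝ] ℝ} (hφ : ∀ g ∈ G, 0 < φ g)
    (hG : ∀ g ∈ G, ∀ g' ∈ G, SameRay ℝ g g' → g = g') {v : E} (hv : v ≠ 0) :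
    IsExtremeRay (· ∈ PointedCone.hull ℝ (G : Set E)) v ↔
      ∃ l : ℝ, 0 < l ∧ ∃ g ∈ G, IsExposedGenerator G g ∧ v = l • g := by
  classical
  refine ⟨fun hext => ?_, fun ⟨l, hl, g, hg, hexp, hvl⟩ => hvl ▸ hexp.isExtremeRay hg hl⟩
  obtain ⟨g₀, hg₀, l, hl, hvl⟩ := hext.exists_mem_eq_pos_smul subset_rfl hext.1 hv
  have hexp := isExposedGenerator_insert_of_notMem_hull
    (fun g hg => hφ g (Finset.mem_of_mem_erase hg)) (hφ g₀ hg₀)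
    (hext.notMem_hull_erase hG hv hg₀ hl hvl)
  rw [Finset.insert_erase hg₀] at hexp
  exact ⟨l, hl, g₀, hg₀, hexp, hvl⟩

end ExtremeRays

lemma Prod.eq_of_sameRay_of_snd_eq {M : Type*} [AddCommGroup M] [Module ℝ M] {x y : M × ℝ}
    (h : SameRay ℝ x y) (hx : x.2 ≠ 0) (hxy : x.2 = y.2) : x = y := by
  obtain ⟨r₁, r₂, hr₁, -, hr⟩ := h.exists_pos (fun h => hx (by simp [h]))
    (fun h => hx (by simp [hxy, h]))
  have hr' : r₁ = r₂ := by
    have := congrArg Prod.snd hr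
    simp only [Prod.smul_snd, smul_eq_mul, ← hxy] at this
    exact mul_right_cancel₀ hx this
  exact smul_right_injective _ hr₁.ne' (hr' ▸ hr)

lemma not_sameRay_mk_one_mk_neg_one {M : Type*} [AddCommGroup M] [Module ℝ M] (x y : M) :
    ¬ SameRay ℝ (x, (1 : ℝ)) (y, (-1 : ℝ)) := fun h =>
  one_ne_zero (eq_zero_of_sameRay_self_neg (h.map (LinearMap.snd ℝ M ℝ)))

section ConeK
variable {n : ℕ} {Sp Sm : Finset (Fin n → ℝ)}

def homogenizedForm (c : Fin n → ℝ) (d : ℝ) : ((Fin n → ℝ) × ℝ) →ₗ[ℝ] ℝ :=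
  (dotProductBilin ℝ ℝ c).coprod (d • LinearMap.id)

lemma homogenizedForm_apply (c w : Fin n → ℝ) (d t : ℝ) :
    homogenizedForm c d (w, t) = (∑ i, c i * w i) + d * t := rfl

lemma homogenizedForm_mk_one (c x : Fin n → ℝ) (d : ℝ) :
    homogenizedForm c d (x, 1) = (∑ i, c i * x i) + d := by
  rw [homogenizedForm_apply, mul_one]

lemma homogenizedForm_neg_mk_neg_one (c y : Fin n → ℝ) (d : ℝ) :
    homogenizedForm c d (-y, -1) = -((∑ i, c i * y i) + d) := by
  simp only [homogenizedForm_apply, Pi.neg_apply, mul_neg, Finset.sum_neg_distrib]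
  ring

lemma exists_eq_homogenizedForm (ψ : ((Fin n → ℝ) × ℝ) →ₗ[ℝ] ℝ) :
    ∃ c d, ψ = homogenizedForm c d := by
  refine ⟨fun i => ψ (Pi.single i 1, 0), ψ (0, 1), ?_⟩
  ext i <;> simp [homogenizedForm]

open Classical in
noncomputable def coneGenerators (Sp Sm : Finset (Fin n → ℝ)) : Finset ((Fin n → ℝ) × ℝ) :=
  Sp.image (fun x => (x, 1)) ∪ Sm.image (fun y => (-y, -1))

lemma forall_mem_coneGenerators {P : (Fin n → ℝ) × ℝ → Prop} :
    (∀ g ∈ coneGenerators Sp Sm, P g) ↔ (∀ x ∈ Sp, P (x, 1)) ∧ ∀ y ∈ Sm, P (-y, -1) := by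
  simp [coneGenerators, or_imp, forall_and]

lemma exists_mem_coneGenerators {P : (Fin n → ℝ) × ℝ → Prop} :
    (∃ g ∈ coneGenerators Sp Sm, P g) ↔ (∃ x ∈ Sp, P (x, 1)) ∨ ∃ y ∈ Sm, P (-y, -1) := by
  simp [coneGenerators, or_and_right, exists_or]

lemma inConeK_iff {v : (Fin n → ℝ) × ℝ} :
    InConeK n Sp Sm v ↔ v ∈ PointedCone.hull ℝ (coneGenerators Sp Sm : Set _) := by
  classical
  rw [coneGenerators, Finset.coe_union, Finset.coe_image, Finset.coe_image, PointedCone.hull,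
    Submodule.span_union, Submodule.mem_sup]
  simp only [Submodule.mem_span_image_finset_iff_exists_fun']
  constructor
  · rintro ⟨lam, gam, hlam, hgam, rfl⟩
    exact ⟨_, ⟨fun x => ⟨lam x, hlam x⟩, rfl⟩, _, ⟨fun y => ⟨gam y, hgam y⟩, rfl⟩, rfl⟩
  · rintro ⟨_, ⟨lam, rfl⟩, _, ⟨gam, rfl⟩, rfl⟩
    exact ⟨fun x => lam x, fun y => gam y, fun x => (lam x).2, fun y => (gam y).2, rfl⟩

lemma sameRay_coneGenerators :
    ∀ g ∈ coneGenerators Sp Sm, ∀ g' ∈ coneGenerators Sp Sm, SameRay ℝ g g' → g = g' := by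
  simp only [forall_mem_coneGenerators]
  refine ⟨fun x _ => ⟨fun x' _ h => Prod.eq_of_sameRay_of_snd_eq h one_ne_zero rfl,
    fun y _ h => ?_⟩, fun y _ => ⟨fun x _ h => ?_, fun y' _ h => ?_⟩⟩
  · exact absurd h (not_sameRay_mk_one_mk_neg_one _ _)
  · exact absurd h.symm (not_sameRay_mk_one_mk_neg_one _ _)
  · exact Prod.eq_of_sameRay_of_snd_eq h (by norm_num) rfl

lemma homogenizedForm_pos_of_mem_coneGenerators {c : Fin n → ℝ} {d : ℝ}
    (hpos : ∀ x ∈ Sp, (∑ i, c i * x i) + d > 0) (hneg : ∀ y ∈ Sm, (∑ i, c i * y i) + d < 0) :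
    ∀ g ∈ coneGenerators Sp Sm, 0 < homogenizedForm c d g :=
  forall_mem_coneGenerators.2 ⟨fun x hx => by rw [homogenizedForm_mk_one]; exact hpos x hx,
    fun y hy => by rw [homogenizedForm_neg_mk_neg_one, neg_pos]; exact hneg y hy⟩

lemma critPlus_iff {x : Fin n → ℝ} :
    CritPlus n Sp Sm x ↔ x ∈ Sp ∧ IsExposedGenerator (coneGenerators Sp Sm) (x, 1) := by
  refine and_congr_right fun _ => ⟨fun ⟨c, d, h0, hpos, hneg⟩ => ?_, fun ⟨ψ, hψ0, hψ⟩ => ?_⟩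
  · refine ⟨homogenizedForm c d, by rwa [homogenizedForm_mk_one],
      forall_mem_coneGenerators.2 ⟨fun x' hx' hne => ?_, fun y hy _ => ?_⟩⟩
    · rw [homogenizedForm_mk_one]; exact hpos x' hx' fun h => hne (h ▸ rfl)
    · rw [homogenizedForm_neg_mk_neg_one, neg_pos]; exact hneg y hy
  · obtain ⟨c, d, rfl⟩ := exists_eq_homogenizedForm ψ
    obtain ⟨hpos, hneg⟩ := forall_mem_coneGenerators.1 hψ
    refine ⟨c, d, by rwa [homogenizedForm_mk_one] at hψ0, fun x' hx' hne => ?_, fun y hy => ?_⟩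
    · have := hpos x' hx' fun h => hne (congrArg Prod.fst h)
      rwa [homogenizedForm_mk_one] at this
    · have := hneg y hy (by norm_num)
      rwa [homogenizedForm_neg_mk_neg_one, neg_pos] at this

lemma critMinus_iff {y : Fin n → ℝ} :
    CritMinus n Sp Sm y ↔ y ∈ Sm ∧ IsExposedGenerator (coneGenerators Sp Sm) (-y, -1) := by
  refine and_congr_right fun _ => ⟨fun ⟨c, d, h0, hneg, hpos⟩ => ?_, fun ⟨ψ, hψ0, hψ⟩ => ?_⟩
  · refine ⟨homogenizedForm c d, by rw [homogenizedForm_neg_mk_neg_one, h0, neg_zero],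
      forall_mem_coneGenerators.2 ⟨fun x hx _ => ?_, fun y' hy' hne => ?_⟩⟩
    · rw [homogenizedForm_mk_one]; exact hpos x hx
    · rw [homogenizedForm_neg_mk_neg_one, neg_pos]; exact hneg y' hy' fun h => hne (h ▸ rfl)
  · obtain ⟨c, d, rfl⟩ := exists_eq_homogenizedForm ψ
    obtain ⟨hpos, hneg⟩ := forall_mem_coneGenerators.1 hψ
    refine ⟨c, d, by rwa [homogenizedForm_neg_mk_neg_one, neg_eq_zero] at hψ0,
      fun y' hy' hne => ?_, fun x hx => ?_⟩
    · have := hneg y' hy' fun h => hne (neg_injective (congrArg Prod.fst h))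
      rwa [homogenizedForm_neg_mk_neg_one, neg_pos] at this
    · have := hpos x hx (by norm_num)
      rwa [homogenizedForm_mk_one] at this

end ConeK

/-- under strict separability, the extreme rays of `K` are exactly the rays
through `(x,1)` for `x ∈ A₊*` and through `(-y,-1)` for `y ∈ A₋*`. -/
theorem stmt4 (n : ℕ) (Sp Sm : Finset (Fin n → ℝ))
    (hsep : ∃ (c : Fin n → ℝ) (d : ℝ),
      (∀ x ∈ Sp, (∑ i, c i * x i) + d > 0) ∧ (∀ y ∈ Sm, (∑ i, c i * y i) + d < 0)) :
    ∀ v : (Fin n → ℝ) × ℝ, v ≠ 0 →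
      (IsExtremeRay (InConeK n Sp Sm) v ↔
        ∃ l : ℝ, 0 < l ∧
          ((∃ x, CritPlus n Sp Sm x ∧ v = l • ((x, (1 : ℝ)) : (Fin n → ℝ) × ℝ)) ∨
           (∃ y, CritMinus n Sp Sm y ∧ v = l • ((-y, (-1 : ℝ)) : (Fin n → ℝ) × ℝ)))) := by
  obtain ⟨c, d, hpos, hneg⟩ := hsep
  intro v hv
  have hK : InConeK n Sp Sm = (· ∈ PointedCone.hull ℝ (coneGenerators Sp Sm : Set _)) :=
    funext fun _ => propext inConeK_iff
  rw [hK, isExtremeRay_hull_iff (homogenizedForm_pos_of_mem_coneGenerators hpos hneg)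
    sameRay_coneGenerators hv]
  simp only [exists_mem_coneGenerators, critPlus_iff, critMinus_iff, and_assoc]
end

section
/- Let $S_+, S_- \subseteq \mathbb{R}^n$ be finite strictly linearly separable sets, and suppose $A_+ \subseteq S_+$ and $A_- \subseteq S_-$ satisfy $A_+ \supseteq A_+^*$ and $A_- \supseteq A_-^*$. Then the cone generated by $\{(x,1): x \in A_+\} \cup \{(-y,-1): y \in A_-\}$ equals the cone generated by $\{(x,1): x \in S_+\} \cup \{(-y,-1): y \in S_-\}$; consequently, the sets of affine classifiers consistent with $(A_+, A_-)$ and with $(S_+, S_-)$ coincide. -/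
/-- `(c,d)` is a consistent affine classifier for positives `A₊` and negatives `A₋`. -/
def Consistent (n : ℕ) (Ap Am : Finset (Fin n → ℝ)) (c : Fin n → ℝ) (d : ℝ) : Prop :=
  (∀ x ∈ Ap, (∑ i, c i * x i) + d ≥ 0) ∧ (∀ y ∈ Am, (∑ i, c i * y i) + d ≤ 0)

open Set

section CriticalGenerators

variable {E : Type*} [AddCommGroup E] [Module ℝ E]

def IsCriticalGenerator (G : Set E) (m : E) : Prop :=
  m ∈ G ∧ ∃ w : Module.Dual ℝ E, w m = 0 ∧ ∀ g ∈ G, g ≠ m → 0 < w g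

variable {G : Set E} {f : Module.Dual ℝ E}

theorem injOn_inv_smul_of_eq_smul (hf : ∀ g ∈ G, 0 < f g)
    (hray : ∀ g ∈ G, ∀ g' ∈ G, ∀ t : ℝ, 0 < t → g = t • g' → g = g') :
    InjOn (fun g => (f g)⁻¹ • g) G := by
  intro g hg g' hg' (h : (f g)⁻¹ • g = (f g')⁻¹ • g')
  refine hray g hg g' hg' (f g * (f g')⁻¹) (by have := hf g hg; have := hf g' hg'; positivity) ?_
  rw [mul_smul, ← h, smul_inv_smul₀ (hf g hg).ne']

variable [TopologicalSpace E] [T2Space E] [IsTopologicalAddGroup E] [ContinuousSMul ℝ E]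
  [LocallyConvexSpace ℝ E] {s : Set E} {p m : E}

theorem Set.Finite.convexHull_extremePoints_convexHull (hs : s.Finite) :
    convexHull ℝ ((convexHull ℝ s).extremePoints ℝ) = convexHull ℝ s := by
  have hext : ((convexHull ℝ s).extremePoints ℝ).Finite := hs.subset extremePoints_convexHull_subset
  rw [← (hext.isClosed_convexHull ℝ).closure_eq]
  exact closure_convexHull_extremePoints (hs.isCompact_convexHull ℝ) (convex_convexHull ℝ s)

theorem Set.Finite.exists_forall_lt_of_mem_extremePoints_convexHull (hs : s.Finite)
    (hp : p ∈ (convexHull ℝ s).extremePoints ℝ) :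
    ∃ l : StrongDual ℝ E, ∀ q ∈ s, q ≠ p → l p < l q := by
  have hp' : p ∉ convexHull ℝ (s \ {p}) := fun h =>
    ((convex_convexHull ℝ s).mem_extremePoints_iff_mem_sdiff_convexHull_sdiff.1 hp).2
      (convexHull_mono (sdiff_subset_sdiff_left (subset_convexHull ℝ s)) h)
  obtain ⟨l, u, hlp, hlu⟩ :=
    geometric_hahn_banach_point_closed (convex_convexHull ℝ _) (hs.sdiff.isClosed_convexHull ℝ) hp'
  exact ⟨l, fun q hq hqp => hlp.trans (hlu q (subset_convexHull ℝ _ ⟨hq, hqp⟩))⟩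

theorem isCriticalGenerator_of_mem_extremePoints (hG : G.Finite) (hf : ∀ g ∈ G, 0 < f g)
    (hray : ∀ g ∈ G, ∀ g' ∈ G, ∀ t : ℝ, 0 < t → g = t • g' → g = g') (hm : m ∈ G)
    (hext : (f m)⁻¹ • m ∈ (convexHull ℝ ((fun g => (f g)⁻¹ • g) '' G)).extremePoints ℝ) :
    IsCriticalGenerator G m := by
  obtain ⟨l, hl⟩ := (hG.image _).exists_forall_lt_of_mem_extremePoints_convexHull hext
  set w := l.toLinearMap - l ((f m)⁻¹ • m) • f
  have hw : ∀ g ∈ G, w g = f g * (l ((f g)⁻¹ • g) - l ((f m)⁻¹ • m)) := by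
    intro g hg
    rw [mul_sub, l.map_smul, smul_eq_mul, ← mul_assoc, mul_inv_cancel₀ (hf g hg).ne', one_mul,
      mul_comm (f g)]
    rfl
  refine ⟨hm, w, by rw [hw m hm, sub_self, mul_zero], fun g hg hgm => ?_⟩
  rw [hw g hg]
  exact mul_pos (hf g hg) (sub_pos.2 (hl _ (mem_image_of_mem _ hg)
    fun h => hgm (injOn_inv_smul_of_eq_smul hf hray hg hm h)))

theorem subset_hull_setOf_isCriticalGenerator (hG : G.Finite) (hf : ∀ g ∈ G, 0 < f g)
    (hray : ∀ g ∈ G, ∀ g' ∈ G, ∀ t : ℝ, 0 < t → g = t • g' → g = g') :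
    G ⊆ PointedCone.hull ℝ {m | IsCriticalGenerator G m} := by
  set C := PointedCone.hull ℝ {m | IsCriticalGenerator G m}
  set P := (fun g => (f g)⁻¹ • g) '' G
  have hPC : convexHull ℝ P ⊆ C := by
    rw [← (hG.image _).convexHull_extremePoints_convexHull]
    refine convexHull_min (fun p hp => ?_) C.convex
    obtain ⟨m, hm, rfl⟩ := extremePoints_convexHull_subset hp
    exact C.smul_mem (inv_nonneg.2 (hf m hm).le) (PointedCone.subset_hull
      (isCriticalGenerator_of_mem_extremePoints hG hf hray hm hp))
  intro g hg
  rw [← smul_inv_smul₀ (hf g hg).ne' g]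
  exact C.smul_mem (hf g hg).le (hPC (subset_convexHull ℝ P (mem_image_of_mem _ hg)))

end CriticalGenerators

section Classifiers

variable {n : ℕ} {Sp Sm Ap Am : Finset (Fin n → ℝ)} {c : Fin n → ℝ} {d : ℝ}

def classifierForm (c : Fin n → ℝ) (d : ℝ) : Module.Dual ℝ ((Fin n → ℝ) × ℝ) where
  toFun v := (∑ i, c i * v.1 i) + d * v.2
  map_add' v w := by
    simp only [Prod.fst_add, Prod.snd_add, Pi.add_apply, mul_add, Finset.sum_add_distrib]
    ring
  map_smul' t v := by
    simp only [Prod.smul_fst, Prod.smul_snd, Pi.smul_apply, smul_eq_mul, RingHom.id_apply,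
      mul_add, Finset.mul_sum, mul_left_comm t]

@[simp]
lemma classifierForm_mk_one (x : Fin n → ℝ) : classifierForm c d (x, 1) = (∑ i, c i * x i) + d :=
  by simp [classifierForm]

@[simp]
lemma classifierForm_neg_mk_neg_one (y : Fin n → ℝ) :
    classifierForm c d (-y, -1) = -((∑ i, c i * y i) + d) := by
  simp [classifierForm]; ring

lemma exists_classifierForm_eq (w : Module.Dual ℝ ((Fin n → ℝ) × ℝ)) :
    ∃ c d, classifierForm c d = w := by
  refine ⟨fun i => w (Pi.single i 1, 0), w (0, 1), ?_⟩
  ext i <;> simp [classifierForm, Pi.single_apply]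

def generators (Sp Sm : Finset (Fin n → ℝ)) : Set ((Fin n → ℝ) × ℝ) :=
  (fun x => (x, 1)) '' Sp ∪ (fun y => (-y, -1)) '' Sm

@[simp]
lemma mk_one_mem_generators {x : Fin n → ℝ} : (x, 1) ∈ generators Sp Sm ↔ x ∈ Sp := by
  simp [generators]
  norm_num

@[simp]
lemma neg_mk_neg_one_mem_generators {y : Fin n → ℝ} : (-y, -1) ∈ generators Sp Sm ↔ y ∈ Sm := by
  simp [generators]
  norm_num

lemma generators_finite (Sp Sm : Finset (Fin n → ℝ)) : (generators Sp Sm).Finite :=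
  ((Sp.finite_toSet.image _).union (Sm.finite_toSet.image _))

lemma generators_mono (hAp : Ap ⊆ Sp) (hAm : Am ⊆ Sm) : generators Ap Am ⊆ generators Sp Sm :=
  union_subset_union (image_mono (Finset.coe_subset.2 hAp)) (image_mono (Finset.coe_subset.2 hAm))

lemma eq_of_mem_generators_of_eq_smul :
    ∀ g ∈ generators Sp Sm, ∀ g' ∈ generators Sp Sm, ∀ t : ℝ, 0 < t → g = t • g' → g = g' := by
  intro g hg g' hg' t ht h
  have ht1 : t = 1 := by
    rcases hg with ⟨x, -, rfl⟩ | ⟨y, -, rfl⟩ <;> rcases hg' with ⟨x', -, rfl⟩ | ⟨y', -, rfl⟩ <;>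
      · have := congrArg Prod.snd h
        simp at this
        linarith
  rw [h, ht1, one_smul]

lemma classifierForm_pos_of_separates (hpos : ∀ x ∈ Sp, (∑ i, c i * x i) + d > 0)
    (hneg : ∀ y ∈ Sm, (∑ i, c i * y i) + d < 0) :
    ∀ g ∈ generators Sp Sm, 0 < classifierForm c d g := by
  rintro _ (⟨x, hx, rfl⟩ | ⟨y, hy, rfl⟩)
  · simpa using hpos x hx
  · simpa using neg_pos.2 (hneg y hy)

lemma InConeK.zero : InConeK n Sp Sm 0 :=
  ⟨0, 0, fun _ => le_rfl, fun _ => le_rfl, by simp⟩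

lemma InConeK.add {v v' : (Fin n → ℝ) × ℝ} (h : InConeK n Sp Sm v) (h' : InConeK n Sp Sm v') :
    InConeK n Sp Sm (v + v') := by
  obtain ⟨l, g, hl, hg, rfl⟩ := h
  obtain ⟨l', g', hl', hg', rfl⟩ := h'
  refine ⟨l + l', g + g', fun x => add_nonneg (hl x) (hl' x), fun y => add_nonneg (hg y) (hg' y),
    ?_⟩
  simp only [Pi.add_apply, add_smul, Finset.sum_add_distrib]
  abel

lemma InConeK.smul {v : (Fin n → ℝ) × ℝ} {t : ℝ} (ht : 0 ≤ t) (h : InConeK n Sp Sm v) :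
    InConeK n Sp Sm (t • v) := by
  obtain ⟨l, g, hl, hg, rfl⟩ := h
  refine ⟨t • l, t • g, fun x => mul_nonneg ht (hl x), fun y => mul_nonneg ht (hg y), ?_⟩
  simp only [Pi.smul_apply, smul_add, Finset.smul_sum, smul_smul, smul_eq_mul]

lemma inConeK_of_mem_generators {g : (Fin n → ℝ) × ℝ} (hg : g ∈ generators Sp Sm) :
    InConeK n Sp Sm g := by
  classical
  rcases hg with ⟨x, hx, rfl⟩ | ⟨y, hy, rfl⟩
  · refine ⟨fun x' => if x' = x then 1 else 0, 0, fun _ => by positivity, fun _ => le_rfl, ?_⟩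
    simpa [ite_smul] using hx
  · refine ⟨0, fun y' => if y' = y then 1 else 0, fun _ => le_rfl, fun _ => by positivity, ?_⟩
    simpa [ite_smul] using hy

lemma inConeK_iff_mem_hull {v : (Fin n → ℝ) × ℝ} :
    InConeK n Sp Sm v ↔ v ∈ PointedCone.hull ℝ (generators Sp Sm) := by
  constructor
  · rintro ⟨l, g, hl, hg, rfl⟩
    refine add_mem (Submodule.sum_mem _ fun x hx => ?_) (Submodule.sum_mem _ fun y hy => ?_)
    · exact PointedCone.smul_mem _ (hl x) (PointedCone.subset_hull (mk_one_mem_generators.2 hx))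
    · exact PointedCone.smul_mem _ (hg y)
        (PointedCone.subset_hull (neg_mk_neg_one_mem_generators.2 hy))
  · intro h
    induction h using Submodule.span_induction with
    | mem g hg => exact inConeK_of_mem_generators hg
    | zero => exact .zero
    | add v v' _ _ h h' => exact h.add h'
    | smul t v _ h => exact h.smul t.2

lemma consistent_iff_mem_dual :
    Consistent n Sp Sm c d ↔
      classifierForm c d ∈ PointedCone.dual (Module.Dual.eval ℝ _) (generators Sp Sm) := by
  simp only [Consistent, PointedCone.mem_dual, Module.Dual.eval_apply, generators, mem_union,
    or_imp, forall_and, forall_mem_image, Finset.mem_coe, classifierForm_mk_one,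
    classifierForm_neg_mk_neg_one, neg_nonneg, ge_iff_le]

lemma mk_one_ne_neg_mk_neg_one (x y : Fin n → ℝ) :
    ((x, 1) : (Fin n → ℝ) × ℝ) ≠ (-y, -1) := by
  norm_num [Prod.ext_iff]

lemma setOf_isCriticalGenerator_subset (hApstar : ∀ x, CritPlus n Sp Sm x → x ∈ Ap)
    (hAmstar : ∀ y, CritMinus n Sp Sm y → y ∈ Am) :
    {m | IsCriticalGenerator (generators Sp Sm) m} ⊆ generators Ap Am := by
  rintro _ ⟨⟨z, hz, rfl⟩ | ⟨z, hz, rfl⟩, w, hwm, hw⟩ <;>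
    obtain ⟨c, d, rfl⟩ := exists_classifierForm_eq w
  · refine mk_one_mem_generators.2 (hApstar z ⟨hz, c, d, by simpa using hwm, ?_, ?_⟩)
    · intro x hx hxz
      simpa using hw _ (mk_one_mem_generators.2 hx) (by simpa using hxz)
    · intro y hy
      simpa only [classifierForm_neg_mk_neg_one, neg_pos] using
        hw _ (neg_mk_neg_one_mem_generators.2 hy) (mk_one_ne_neg_mk_neg_one z y).symm
  · refine neg_mk_neg_one_mem_generators.2 (hAmstar z ⟨hz, c, d, ?_, ?_, ?_⟩)
    · simpa only [classifierForm_neg_mk_neg_one, neg_eq_zero] using hwm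
    · intro y hy hyz
      simpa only [classifierForm_neg_mk_neg_one, neg_pos] using
        hw _ (neg_mk_neg_one_mem_generators.2 hy) (by simpa using hyz)
    · intro x hx
      simpa using hw _ (mk_one_mem_generators.2 hx) (mk_one_ne_neg_mk_neg_one x z)

end Classifiers

/-- if `A₊ ⊇ A₊*` and `A₋ ⊇ A₋*`, then `K_{A₊,A₋} = K_{S₊,S₋}` and the
consistent affine classifiers for `(A₊,A₋)` and `(S₊,S₋)` coincide. -/
theorem stmt5 (n : ℕ) (Sp Sm Ap Am : Finset (Fin n → ℝ))
    (hsep : ∃ (c : Fin n → ℝ) (d : ℝ),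
      (∀ x ∈ Sp, (∑ i, c i * x i) + d > 0) ∧ (∀ y ∈ Sm, (∑ i, c i * y i) + d < 0))
    (hAp : Ap ⊆ Sp) (hAm : Am ⊆ Sm)
    (hApstar : ∀ x, CritPlus n Sp Sm x → x ∈ Ap)
    (hAmstar : ∀ y, CritMinus n Sp Sm y → y ∈ Am) :
    (∀ v, InConeK n Ap Am v ↔ InConeK n Sp Sm v) ∧
      (∀ (c : Fin n → ℝ) (d : ℝ), Consistent n Ap Am c d ↔ Consistent n Sp Sm c d) := by
  obtain ⟨c₀, d₀, hpos, hneg⟩ := hsep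
  have hcritical : generators Sp Sm ⊆ PointedCone.hull ℝ (generators Ap Am) :=
    (subset_hull_setOf_isCriticalGenerator (generators_finite Sp Sm)
      (classifierForm_pos_of_separates hpos hneg) eq_of_mem_generators_of_eq_smul).trans
      (Submodule.span_mono (setOf_isCriticalGenerator_subset hApstar hAmstar))
  have hhull : PointedCone.hull ℝ (generators Ap Am) = PointedCone.hull ℝ (generators Sp Sm) :=
    le_antisymm (Submodule.span_mono (generators_mono hAp hAm)) (Submodule.span_le.2 hcritical)
  refine ⟨fun v => by rw [inConeK_iff_mem_hull, inConeK_iff_mem_hull, hhull], fun c d => ?_⟩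
  rw [consistent_iff_mem_dual, consistent_iff_mem_dual, ← PointedCone.dual_hull, hhull,
    PointedCone.dual_hull]
end

section
/- Let $S_-, S_+ \subseteq \mathbb{R}^n$ be finite strictly linearly separable sets. Define the must-leak set $B = \{x \in S_- : x \notin \mathrm{Safe}(S_- \setminus \{x\}, S_+)\}$ and let $V$ be the set of vertices (extreme points) of the convex set $\mathrm{Safe}(S_-, S_+)$ that lie in $S_-$. Then $B = V$. -/
/-- The safe points: those classified negative by every hyperplane `(d, c)` separating
`A` (negatives, weakly) from `A₊` (positives, strictly). -/
def Safe (n : ℕ) (A Ap : Set (Fin n → ℝ)) : Set (Fin n → ℝ) :=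
  {z | ∀ (d : Fin n → ℝ) (c : ℝ),
    (∀ a ∈ A, ∑ i, d i * a i ≤ c) → (∀ b ∈ Ap, ∑ i, d i * b i > c) →
    ∑ i, d i * z i ≤ c}

/-!
If `x ∈ Safe(S₋ \ {x}, S₊)`, the compact hulls `conv(S₋ \ {x})` and `conv({x} ∪ S₊)` meet, at
some `p`: otherwise Hahn–Banach separates them strictly, by a hyperplane putting `x` on the
wrong side. Every admissible hyperplane has `d·x ≤ d·p`, so `2x - p` is safe as well; `x` is
the midpoint of `p` and `2x - p`, so an extreme `x` equals `p ∈ conv(S₋ \ {x})`, which is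
impossible.

Conversely, if `x` must leak, a hyperplane witnessing this, combined with a strict separator
of `S₋` and `S₊`, gives a strict separator of `S₋ \ {x}` and `S₊` passing through `x`. Since the
sets are finite, all its small tilts about `x` are admissible too, so a safe segment through `x`
lies in all these hyperplanes and is therefore degenerate.
-/

open Set Filter Topology

section Safe

variable {n : ℕ} {A B : Set (Fin n → ℝ)} {d : Fin n → ℝ} {c : ℝ} {x y z p : Fin n → ℝ}

def StrictlySeparates (A B : Set (Fin n → ℝ)) (d : Fin n → ℝ) (c : ℝ) : Prop :=
  (∀ a ∈ A, d ⬝ᵥ a < c) ∧ ∀ b ∈ B, c < d ⬝ᵥ b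

theorem mem_safe_iff : z ∈ Safe n A B ↔
    ∀ (d : Fin n → ℝ) (c : ℝ), (∀ a ∈ A, d ⬝ᵥ a ≤ c) → (∀ b ∈ B, c < d ⬝ᵥ b) → d ⬝ᵥ z ≤ c :=
  Iff.rfl

theorem subset_safe : A ⊆ Safe n A B := fun a ha _ _ hA _ => hA a ha

theorem convex_safe : Convex ℝ (Safe n A B) := by
  intro y hy z hz s t hs ht hst
  rw [mem_safe_iff] at hy hz ⊢
  intro d c hA hB
  have hyc := hy d c hA hB
  have hzc := hz d c hA hB
  rw [dotProduct_add, dotProduct_smul, dotProduct_smul, smul_eq_mul, smul_eq_mul]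
  calc s * d ⬝ᵥ y + t * d ⬝ᵥ z ≤ s * c + t * c := by gcongr
    _ = c := by rw [← add_mul, hst, one_mul]

theorem convexHull_subset_safe : convexHull ℝ A ⊆ Safe n A B :=
  convexHull_min subset_safe convex_safe

theorem two_smul_sub_mem_safe (hx : x ∈ Safe n A B) (hp : p ∈ convexHull ℝ (insert x B)) :
    (2 : ℝ) • x - p ∈ Safe n A B := by
  rw [mem_safe_iff] at hx ⊢
  intro d c hA hB
  have hxc := hx d c hA hB
  have hxp : d ⬝ᵥ x ≤ d ⬝ᵥ p := by
    refine convexHull_min ?_ (convex_halfSpace_ge (f := (d ⬝ᵥ ·))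
      ⟨dotProduct_add d, fun t w => dotProduct_smul t d w⟩ (d ⬝ᵥ x)) hp
    rintro w (rfl | hw)
    · exact le_refl (d ⬝ᵥ _)
    · exact hxc.trans (hB w hw).le
  rw [dotProduct_sub, dotProduct_smul, smul_eq_mul]
  linarith

theorem convexHull_inter_convexHull_insert_nonempty (hA : A.Finite) (hB : B.Finite)
    (hz : z ∈ Safe n A B) : (convexHull ℝ A ∩ convexHull ℝ (insert z B)).Nonempty := by
  rw [← not_disjoint_iff_nonempty_inter]
  intro hdisj
  obtain ⟨f, u, v, hfA, huv, hfB⟩ := geometric_hahn_banach_compact_closed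
    (convex_convexHull ℝ A) (hA.isCompact_convexHull ℝ)
    (convex_convexHull ℝ _) ((hB.insert z).isClosed_convexHull ℝ) hdisj
  set d := (dotProductEquiv ℝ (Fin n)).symm (f : (Fin n → ℝ) →ₗ[ℝ] ℝ)
  have hd : ∀ w, d ⬝ᵥ w = f w := fun w =>
    LinearMap.congr_fun ((dotProductEquiv ℝ (Fin n)).apply_symm_apply _) w
  have hzu : d ⬝ᵥ z ≤ u := mem_safe_iff.1 hz d u
    (fun a ha => by rw [hd]; exact (hfA a (subset_convexHull ℝ A ha)).le)
    (fun b hb => by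
      rw [hd]; exact huv.trans (hfB b (subset_convexHull ℝ _ (mem_insert_of_mem z hb))))
  have hvz := hfB z (subset_convexHull ℝ _ (mem_insert z B))
  rw [hd] at hzu
  linarith

theorem notMem_safe_sdiff_singleton_of_mem_extremePoints (hA : A.Finite) (hB : B.Finite)
    (hx : x ∈ A) (hext : x ∈ extremePoints ℝ (Safe n A B)) : x ∉ Safe n (A \ {x}) B := by
  intro hleak
  obtain ⟨p, hpA, hpB⟩ := convexHull_inter_convexHull_insert_nonempty (hA.sdiff) hB hleak
  have hsub : convexHull ℝ (A \ {x}) ⊆ Safe n A B :=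
    (convexHull_mono sdiff_subset).trans convexHull_subset_safe
  have hpx : p = x := (mem_extremePoints_iff_left.1 hext).2 p (hsub hpA) _
    (two_smul_sub_mem_safe (subset_safe hx) hpB)
    ⟨1 / 2, 1 / 2, by norm_num, by norm_num, by norm_num, by module⟩
  subst hpx
  exact (extremePoints_convexHull_subset
    (inter_extremePoints_subset_extremePoints_of_subset hsub ⟨hpA, hext⟩)).2 rfl

theorem dotProduct_eq_of_mem_safe_of_mem_openSegment (hy : y ∈ Safe n A B) (hz : z ∈ Safe n A B)
    (hx : x ∈ openSegment ℝ y z) (hA : ∀ a ∈ A, d ⬝ᵥ a ≤ c) (hB : ∀ b ∈ B, c < d ⬝ᵥ b)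
    (hdx : d ⬝ᵥ x = c) : d ⬝ᵥ y = c := by
  obtain ⟨s, t, hs, ht, hst, rfl⟩ := hx
  have hyc : d ⬝ᵥ y ≤ c := hy d c hA hB
  have hzc : d ⬝ᵥ z ≤ c := hz d c hA hB
  rw [dotProduct_add, dotProduct_smul, dotProduct_smul, smul_eq_mul, smul_eq_mul] at hdx
  have hsum : s * (c - d ⬝ᵥ y) + t * (c - d ⬝ᵥ z) = 0 := by linear_combination c * hst - hdx
  have hsy : s * (c - d ⬝ᵥ y) = 0 := by
    linarith [mul_nonneg hs.le (sub_nonneg.2 hyc), mul_nonneg ht.le (sub_nonneg.2 hzc)]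
  linarith [(mul_eq_zero.1 hsy).resolve_left hs.ne']

theorem StrictlySeparates.eventually_add_smul (hA : A.Finite) (hB : B.Finite)
    (h : StrictlySeparates A B d c) (v : Fin n → ℝ) (t : ℝ) :
    ∀ᶠ ε in 𝓝 (0 : ℝ), StrictlySeparates A B (d + ε • v) (c + ε * t) := by
  simp only [StrictlySeparates, add_dotProduct, smul_dotProduct, smul_eq_mul]
  refine ((eventually_all_finite hA).2 fun a ha => ?_).and
    ((eventually_all_finite hB).2 fun b hb => ?_)
  · exact ContinuousAt.eventually_lt (by fun_prop) (by fun_prop) (by simpa using h.1 a ha)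
  · exact ContinuousAt.eventually_lt (by fun_prop) (by fun_prop) (by simpa using h.2 b hb)

theorem exists_strictlySeparates_of_notMem_safe {d₀ : Fin n → ℝ} {c₀ : ℝ}
    (h₀ : StrictlySeparates A B d₀ c₀) (hx₀ : d₀ ⬝ᵥ x < c₀) (hx : x ∉ Safe n A B) :
    ∃ d c, d ⬝ᵥ x = c ∧ StrictlySeparates A B d c := by
  simp only [mem_safe_iff, not_forall, not_le] at hx
  obtain ⟨d, c, hdA, hdB, hdx⟩ := hx
  set κ := (c₀ - d₀ ⬝ᵥ x) / (d ⬝ᵥ x - c)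
  have hκ : 0 < κ := div_pos (by linarith) (by linarith)
  have hκx : κ * (d ⬝ᵥ x - c) = c₀ - d₀ ⬝ᵥ x := div_mul_cancel₀ _ (by linarith)
  refine ⟨d₀ + κ • d, c₀ + κ * c, ?_, fun a ha => ?_, fun b hb => ?_⟩ <;>
    simp only [add_dotProduct, smul_dotProduct, smul_eq_mul]
  · linear_combination hκx
  · nlinarith [h₀.1 a ha, hdA a ha]
  · nlinarith [h₀.2 b hb, hdB b hb]

theorem mem_extremePoints_safe_of_strictlySeparates (hA : A.Finite) (hB : B.Finite)
    (hx : x ∈ A)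
    (h : StrictlySeparates (A \ {x}) B d c) (hdx : d ⬝ᵥ x = c) :
    x ∈ extremePoints ℝ (Safe n A B) := by
  refine mem_extremePoints_iff_left.2 ⟨subset_safe hx, fun y hy z hz hxyz => ?_⟩
  have tight : ∀ d' c', StrictlySeparates (A \ {x}) B d' c' → d' ⬝ᵥ x = c' → d' ⬝ᵥ y = c' := by
    intro d' c' h' hdx'
    refine dotProduct_eq_of_mem_safe_of_mem_openSegment hy hz hxyz (fun a ha => ?_) h'.2 hdx'
    by_cases hax : a = x
    · exact hax ▸ hdx'.le
    · exact (h'.1 a ⟨ha, hax⟩).le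
  obtain ⟨ε, hε, hε0⟩ := ((h.eventually_add_smul hA.sdiff hB (y - x) ((y - x) ⬝ᵥ x)).filter_mono
    nhdsWithin_le_nhds |>.and self_mem_nhdsWithin).exists (f := 𝓝[≠] (0 : ℝ))
  have hdy := tight d c h hdx
  have hεy := tight _ _ hε (by simp only [add_dotProduct, smul_dotProduct, smul_eq_mul, hdx])
  simp only [add_dotProduct, smul_dotProduct, smul_eq_mul, hdy, add_right_inj] at hεy
  have hyx : (y - x) ⬝ᵥ (y - x) = 0 := by
    rw [dotProduct_sub, mul_left_cancel₀ hε0 hεy, sub_self]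
  exact sub_eq_zero.1 (dotProduct_self_eq_zero.1 hyx)

end Safe

/-- for strictly separable finite `S₋, S₊`, the must-leak set
`B = {x ∈ S₋ : x ∉ Safe(S₋ \ {x}, S₊)}` equals the set of extreme points of
`Safe(S₋, S₊)` lying in `S₋`. -/
theorem stmt12 (n : ℕ) (Sm Sp : Finset (Fin n → ℝ))
    (hsep : ∃ (d : Fin n → ℝ) (c : ℝ),
      (∀ y ∈ Sm, ∑ i, d i * y i < c) ∧ (∀ x ∈ Sp, ∑ i, d i * x i > c)) :
    {x ∈ (Sm : Set (Fin n → ℝ)) | x ∉ Safe n (↑Sm \ {x}) ↑Sp} =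
      {x ∈ (Sm : Set (Fin n → ℝ)) | x ∈ Set.extremePoints ℝ (Safe n ↑Sm ↑Sp)} := by
  obtain ⟨d₀, c₀, h₀⟩ := hsep
  ext x
  simp only [mem_ofPred_eq, and_congr_right_iff]
  intro hx
  constructor
  · intro hleak
    obtain ⟨d, c, hdx, hd⟩ := exists_strictlySeparates_of_notMem_safe
      ⟨fun a ha => h₀.1 a ha.1, h₀.2⟩ (h₀.1 x hx) hleak
    exact mem_extremePoints_safe_of_strictlySeparates Sm.finite_toSet Sp.finite_toSet hx hd hdx
  · exact notMem_safe_sdiff_singleton_of_mem_extremePoints Sm.finite_toSet Sp.finite_toSet hx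
end
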